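/- The logic LEI is reflexive-insensitive: for any LEI-model M = (W, R, V) and its reflexive closure M' = (W, R ∪ {(w,w) : w ∈ W}, V), every formula has the same truth value at every world in M and M'. -/
import Mathlib

/-- Three truth values of strong Kleene logic: `f` (0), `n` (∅), `t` (1). -/
inductive TV where
  | f : TV
  | n : TV
  | t : TV
deriving DecidableEq

/-- Kleene negation: swaps 1 and 0, fixes ∅. -/
def TV.neg : TV → TV
  | .t => .f
  | .n => .n
  | .f => .t

/-- Kleene conjunction: minimum under 0 < ∅ < 1. -/
def TV.and : TV → TV → TV
  | .t, b => b
  | .n, .t => .n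
  | .n, b => b
  | .f, _ => .f

/-- Kleene disjunction: maximum under 0 < ∅ < 1. -/
def TV.or : TV → TV → TV
  | .f, b => b
  | .n, .f => .n
  | .n, b => b
  | .t, _ => .t

/-- Two-valued implication: value 1 unless the antecedent is 1 and the consequent is not. -/
def TV.imp : TV → TV → TV
  | .t, .t => .t
  | .t, _ => .f
  | _, _ => .t

/-- Modal formulas of LEI: atoms, ¬, ∧, ∨, → and the ignorance operator I. -/
inductive MForm where
  | atom : ℕ → MForm
  | neg : MForm → MForm
  | conj : MForm → MForm → MForm
  | disj : MForm → MForm → MForm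
  | impl : MForm → MForm → MForm
  | ig : MForm → MForm

/-- A LEI-model: a Kripke frame with a three-valued atomic valuation. -/
structure LEIModel (W : Type) where
  R : W → W → Prop
  V : ℕ → W → TV

open Classical in
/-- Three-valued evaluation in a LEI-model: strong Kleene clauses for ¬, ∧, ∨,
two-valued implication, and `I φ` is `t` at `w` iff `φ` is `t` at `w` and `φ` is not `t`
at any accessible world distinct from `w`; otherwise `I φ` is `f`. -/
noncomputable def val {W : Type} (M : LEIModel W) : MForm → W → TV
  | .atom k, w => M.V k w
  | .neg φ, w => (val M φ w).neg
  | .conj φ ψ, w => (val M φ w).and (val M ψ w)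
  | .disj φ ψ, w => (val M φ w).or (val M ψ w)
  | .impl φ ψ, w => (val M φ w).imp (val M ψ w)
  | .ig φ, w =>
      if val M φ w = TV.t ∧ ∀ w', w' ≠ w → M.R w w' → val M φ w' ≠ TV.t then TV.t
      else TV.f

/-- LEI is reflexive-insensitive: every formula has the same truth value at every world
in a LEI-model M and in its reflexive closure. -/
theorem stmt8 {W : Type} (M : LEIModel W) :
    ∀ (φ : MForm) (w : W),
      val M φ w = val { R := fun a b => M.R a b ∨ a = b, V := M.V } φ w := by
  intro φ
  induction φ with
  | atom k => intro w; rfl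
  | neg φ ih => intro w; simp [val, ih]
  | conj φ ψ ih1 ih2 => intro w; simp [val, ih1, ih2]
  | disj φ ψ ih1 ih2 => intro w; simp [val, ih1, ih2]
  | impl φ ψ ih1 ih2 => intro w; simp [val, ih1, ih2]
  | ig φ ih =>
    intro w
    simp only [val]
    congr 1
    apply propext
    constructor
    · rintro ⟨h1, h2⟩
      exact ⟨by rw [← ih]; exact h1, fun w' hne hr => by
        rw [← ih]
        exact h2 w' hne (hr.resolve_right (fun h => hne h.symm))⟩
    · rintro ⟨h1, h2⟩
      exact ⟨by rw [ih]; exact h1, fun w' hne hr => by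
        rw [ih]; exact h2 w' hne (Or.inl hr)⟩
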